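/- Let q be a prime power and let n, k, t, d, r be integers with n ≥ k ≥ t ≥ 1, 0 ≤ r ≤ t and 2r < d ≤ n. Let C ⊆ F_q^n be a code in which any two distinct words are at Hamming distance at least d and which contains an (n,k,q) systematic code. Then there exists a code C̄ ⊆ F_q^{n−t} with the following properties: (i) any two distinct words of C̄ are at Hamming distance at least d − 2r; (ii) |C̄| ≥ |C|·|B(r,t)|/q^t (equivalently q^t·|C̄| ≥ |C|·|B(r,t)|); (iii) the zero vector belongs to C̄; (iv) every nonzero word of C̄ has weight at least d − r. -/

import Mathlib

/-- `|B(l,m)| = ∑_{j=0}^{l} C(m,j)(q−1)^j`, the number of vectors of `F_q^m`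
of Hamming weight at most `l`. -/
def ballCard (q l m : ℕ) : ℕ := ∑ j ∈ Finset.range (l + 1), m.choose j * (q - 1) ^ j

/-- `C` is an `(n,k,q)` systematic code: the image of an injective map
`φ : F^k → F^n` which is the identity on the first `k` coordinates. -/
def IsSystematicCode {F : Type} [Fintype F] [DecidableEq F] {n : ℕ} (k : ℕ)
    (C : Finset (Fin n → F)) : Prop :=
  ∃ φ : (Fin k → F) → (Fin n → F), Function.Injective φ ∧
    (∀ v : Fin k → F, ∀ i : Fin n, ∀ h : (i : ℕ) < k, φ v i = v ⟨i, h⟩) ∧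
    C = Finset.image φ Finset.univ


/-!
Split the coordinates into the first `t` and the remaining `n - t`. Averaging over the centres
`x ∈ F^t`, some Hamming ball of radius `r` around `x` contains the first `t` coordinates of at
least `|C|·|B(r,t)|/q^t` codewords; these codewords pairwise agree up to `2r` positions there, so
their tails are pairwise at distance `≥ d - 2r`. Since the code is systematic, one of them, `c₀`,
begins with `x` itself; translating all tails by the tail of `c₀` puts `0` into the punctured
code, and every other tail then differs from that of `c₀` in at least `d - r` positions.
-/

open Finset

section HammingBall

variable {ι F : Type*} [Fintype ι] [DecidableEq ι] [Fintype F] [DecidableEq F]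

lemma card_filter_support_eq [Zero F] (s : Finset ι) :
    #{y : ι → F | ({i | y i ≠ 0} : Finset ι) = s} = (Fintype.card F - 1) ^ #s := by
  have hpi : ({y : ι → F | ({i | y i ≠ 0} : Finset ι) = s} : Finset _) =
      Fintype.piFinset fun i => if i ∈ s then univ.erase 0 else {0} := by
    ext y
    simp only [mem_filter, mem_univ, true_and, Fintype.mem_piFinset, Finset.ext_iff]
    refine forall_congr' fun i => ?_
    by_cases hi : i ∈ s <;> simp [hi]
  rw [hpi, Fintype.card_piFinset]
  simp only [apply_ite card, card_erase_of_mem (mem_univ _), card_univ, card_singleton]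
  rw [prod_ite_mem, univ_inter, prod_const]

lemma card_hammingNorm_eq [Zero F] (j : ℕ) :
    #{y : ι → F | hammingNorm y = j} = (Fintype.card ι).choose j * (Fintype.card F - 1) ^ j := by
  rw [card_eq_sum_card_fiberwise (f := fun y : ι → F => ({i | y i ≠ 0} : Finset ι))
    (t := powersetCard j univ) fun y hy => by simpa [mem_powersetCard, hammingNorm] using hy]
  have hfibre : ∀ s ∈ powersetCard j (univ : Finset ι),
      #{y ∈ ({y : ι → F | hammingNorm y = j} : Finset _) | ({i | y i ≠ 0} : Finset ι) = s}
        = (Fintype.card F - 1) ^ j := by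
    intro s hs
    rw [mem_powersetCard] at hs
    rw [filter_filter, ← hs.2, ← card_filter_support_eq]
    congr 1
    ext y
    simp only [mem_filter, mem_univ, true_and, and_iff_right_iff_imp]
    rintro rfl
    rfl
  rw [sum_congr rfl hfibre, sum_const, card_powersetCard, card_univ, smul_eq_mul]

lemma card_hammingNorm_le [Zero F] (r : ℕ) :
    #{y : ι → F | hammingNorm y ≤ r} = ballCard (Fintype.card F) r (Fintype.card ι) := by
  rw [ballCard, card_eq_sum_card_fiberwise (f := hammingNorm) (t := range (r + 1))
    fun y hy => by simp_all]
  refine sum_congr rfl fun j hj => ?_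
  rw [filter_filter, ← card_hammingNorm_eq]
  congr 1
  ext y
  simp only [mem_filter, mem_univ, true_and, and_iff_right_iff_imp]
  rintro rfl
  simpa [Nat.lt_succ_iff] using hj

lemma card_hammingDist_le [AddGroup F] (a : ι → F) (r : ℕ) :
    #{x : ι → F | hammingDist a x ≤ r} = ballCard (Fintype.card F) r (Fintype.card ι) := by
  rw [← card_hammingNorm_le]
  exact card_equiv (Equiv.addLeft (-a)) fun x => by
    simp only [mem_filter, mem_univ, true_and, Equiv.coe_addLeft, hammingDist_eq_hammingNorm]

end HammingBall

section Split

variable {ι κ β : Type*} [Fintype ι] [Fintype κ] [DecidableEq β]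

lemma hammingDist_comp_equiv (e : κ ≃ ι) (x y : ι → β) :
    hammingDist (x ∘ e) (y ∘ e) = hammingDist x y :=
  card_equiv e fun i => by simp

lemma hammingDist_sum_type (x y : ι ⊕ κ → β) :
    hammingDist x y =
      hammingDist (x ∘ Sum.inl) (y ∘ Sum.inl) + hammingDist (x ∘ Sum.inr) (y ∘ Sum.inr) := by
  simp only [hammingDist, card_filter, Fintype.sum_sum_type, Function.comp_apply]

lemma sub_hammingDist_inl_le_hammingDist_inr {d s : ℕ} {x y : ι ⊕ κ → β}
    (hd : d ≤ hammingDist x y) (hs : hammingDist (x ∘ Sum.inl) (y ∘ Sum.inl) ≤ s) :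
    d - s ≤ hammingDist (x ∘ Sum.inr) (y ∘ Sum.inr) := by
  rw [hammingDist_sum_type] at hd
  omega

end Split

lemma hammingDist_sub_right {ι F : Type*} [Fintype ι] [DecidableEq F] [AddGroup F]
    (x y z : ι → F) : hammingDist (x - z) (y - z) = hammingDist x y := by
  simp only [hammingDist, Pi.sub_apply, ne_eq, sub_left_inj]

section Averaging

variable {α ι F : Type*} [Fintype ι] [DecidableEq ι] [Fintype F] [DecidableEq F] [AddGroup F]

lemma sum_card_filter_hammingDist_le (C : Finset α) (p : α → ι → F) (r : ℕ) :
    ∑ x : ι → F, #{c ∈ C | hammingDist (p c) x ≤ r}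
      = #C * ballCard (Fintype.card F) r (Fintype.card ι) := by
  simp only [card_filter]
  rw [sum_comm, ← smul_eq_mul, ← sum_const]
  exact sum_congr rfl fun c _ => by rw [← card_filter, card_hammingDist_le]

lemma exists_le_card_filter_hammingDist_le (C : Finset α) (p : α → ι → F) (r : ℕ) :
    ∃ x : ι → F, #C * ballCard (Fintype.card F) r (Fintype.card ι)
      ≤ Fintype.card F ^ Fintype.card ι * #{c ∈ C | hammingDist (p c) x ≤ r} := by
  have hsum : ∑ _x : ι → F, #C * ballCard (Fintype.card F) r (Fintype.card ι)
      ≤ ∑ x : ι → F, Fintype.card F ^ Fintype.card ι * #{c ∈ C | hammingDist (p c) x ≤ r} := by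
    rw [sum_const, ← mul_sum, sum_card_filter_hammingDist_le, card_univ, Fintype.card_fun,
      smul_eq_mul]
  obtain ⟨x, -, hx⟩ := exists_le_of_sum_le univ_nonempty hsum
  exact ⟨x, hx⟩

end Averaging

theorem exists_punctured_code_of_forall_exists_inl_eq {ι κ F : Type*} [Fintype ι] [DecidableEq ι]
    [Fintype κ] [Fintype F] [DecidableEq F] [AddGroup F] {d r : ℕ} (hrd : 2 * r < d)
    (C : Finset (ι ⊕ κ → F)) (hC : ∀ c ∈ C, ∀ c' ∈ C, c ≠ c' → d ≤ hammingDist c c')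
    (hinl : ∀ x : ι → F, ∃ c ∈ C, c ∘ Sum.inl = x) :
    ∃ Cb : Finset (κ → F),
      (∀ c ∈ Cb, ∀ c' ∈ Cb, c ≠ c' → d - 2 * r ≤ hammingDist c c') ∧
      #C * ballCard (Fintype.card F) r (Fintype.card ι) ≤ Fintype.card F ^ Fintype.card ι * #Cb ∧
      0 ∈ Cb ∧ (∀ c ∈ Cb, c ≠ 0 → d - r ≤ hammingNorm c) := by
  obtain ⟨x, hx⟩ := exists_le_card_filter_hammingDist_le C (· ∘ Sum.inl) r
  set P := {c ∈ C | hammingDist (c ∘ Sum.inl) x ≤ r}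
  obtain ⟨c₀, hc₀C, hc₀x⟩ := hinl x
  have hc₀P : c₀ ∈ P := mem_filter.2 ⟨hc₀C, by simp [hc₀x]⟩
  have hP : ∀ c ∈ P, ∀ c' ∈ P, c ≠ c' → d - 2 * r ≤ hammingDist (c ∘ Sum.inr) (c' ∘ Sum.inr) := by
    intro c hc c' hc' hne
    rw [mem_filter] at hc hc'
    refine sub_hammingDist_inl_le_hammingDist_inr (hC c hc.1 c' hc'.1 hne) ?_
    calc hammingDist (c ∘ Sum.inl) (c' ∘ Sum.inl)
        ≤ hammingDist (c ∘ Sum.inl) x + hammingDist x (c' ∘ Sum.inl) := hammingDist_triangle ..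
      _ ≤ 2 * r := by rw [hammingDist_comm x]; omega
  set f : (ι ⊕ κ → F) → κ → F := fun c => c ∘ Sum.inr - c₀ ∘ Sum.inr
  have hf : ∀ c c', hammingDist (f c) (f c') = hammingDist (c ∘ Sum.inr) (c' ∘ Sum.inr) :=
    fun c c' => hammingDist_sub_right ..
  have hf_inj : Set.InjOn f P := fun c hc c' hc' hcc' => by
    by_contra hne
    have := hP c hc c' hc' hne
    rw [← hf, hcc', hammingDist_self] at this
    omega
  refine ⟨P.image f, ?_, ?_, mem_image.2 ⟨c₀, hc₀P, sub_self _⟩, ?_⟩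
  · rintro _ hcb _ hcb' hne
    obtain ⟨c, hc, rfl⟩ := mem_image.1 hcb
    obtain ⟨c', hc', rfl⟩ := mem_image.1 hcb'
    rw [hf]
    exact hP c hc c' hc' fun h => hne (h ▸ rfl)
  · rwa [card_image_of_injOn hf_inj]
  · rintro _ hcb hne
    obtain ⟨c, hc, rfl⟩ := mem_image.1 hcb
    have hcc₀ : c ≠ c₀ := by rintro rfl; exact hne (sub_self _)
    rw [← hammingDist_zero_right, ← sub_self (c₀ ∘ Sum.inr), hammingDist_sub_right]
    refine sub_hammingDist_inl_le_hammingDist_inr (hC c (mem_filter.1 hc).1 c₀ hc₀C hcc₀) ?_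
    simpa [hc₀x] using (mem_filter.1 hc).2

theorem exists_punctured_code_general (q n k t d r : ℕ)
    (F : Type) [Field F] [Fintype F] [DecidableEq F] (hF : Fintype.card F = q)
    (htk : t ≤ k) (hkn : k ≤ n)
    (hrd : 2 * r < d)
    (C : Finset (Fin n → F))
    (hCdist : ∀ c ∈ C, ∀ c' ∈ C, c ≠ c' → d ≤ hammingDist c c')
    (hsys : ∃ D : Finset (Fin n → F), D ⊆ C ∧ IsSystematicCode k D) :
    ∃ Cb : Finset (Fin (n - t) → F),
      (∀ c ∈ Cb, ∀ c' ∈ Cb, c ≠ c' → d - 2 * r ≤ hammingDist c c') ∧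
      C.card * ballCard q r t ≤ q ^ t * Cb.card ∧
      (0 : Fin (n - t) → F) ∈ Cb ∧
      (∀ c ∈ Cb, c ≠ 0 → d - r ≤ hammingNorm c) := by
  have htn : t ≤ n := htk.trans hkn
  let e : Fin t ⊕ Fin (n - t) ≃ Fin n := finSumFinEquiv.trans (finCongr (Nat.add_sub_cancel' htn))
  have hC : ∀ c ∈ C.image (· ∘ e), ∀ c' ∈ C.image (· ∘ e), c ≠ c' → d ≤ hammingDist c c' := by
    rintro _ hce _ hce' hne
    obtain ⟨c, hc, rfl⟩ := mem_image.1 hce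
    obtain ⟨c', hc', rfl⟩ := mem_image.1 hce'
    rw [hammingDist_comp_equiv]
    exact hCdist c hc c' hc' fun h => hne (h ▸ rfl)
  obtain ⟨D, hDC, φ, -, hφ, rfl⟩ := hsys
  have hinl : ∀ x : Fin t → F, ∃ c ∈ C.image (· ∘ e), c ∘ Sum.inl = x := fun x => by
    refine ⟨φ (fun i => if h : (i : ℕ) < t then x ⟨i, h⟩ else 0) ∘ e,
      mem_image_of_mem _ (hDC (mem_image_of_mem _ (mem_univ _))), funext fun i => ?_⟩
    have hik : (e (Sum.inl i) : ℕ) < k := by simpa [e] using i.2.trans_le htk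
    change φ _ (e (Sum.inl i)) = x i
    rw [hφ _ _ hik]
    simp [e]
  obtain ⟨Cb, hdist, hcard, hzero, hweight⟩ :=
    exists_punctured_code_of_forall_exists_inl_eq hrd _ hC hinl
  rw [card_image_of_injective _ e.surjective.injective_comp_right, Fintype.card_fin, hF] at hcard
  exact ⟨Cb, hdist, hcard, hzero, hweight⟩

/-- Existence of the punctured code `C̄ ⊆ F_q^{n−t}` of distance `≥ d − 2r`, size at least
`|C|·|B(r,t)|/q^t`, containing `0`, and whose nonzero words have weight `≥ d − r`. -/
theorem exists_punctured_code (q n k t d r : ℕ) (hq : IsPrimePow q)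
    (F : Type) [Field F] [Fintype F] [DecidableEq F] (hF : Fintype.card F = q)
    (ht1 : 1 ≤ t) (htk : t ≤ k) (hkn : k ≤ n)
    (hrt : r ≤ t) (hrd : 2 * r < d) (hdn : d ≤ n)
    (C : Finset (Fin n → F))
    (hCdist : ∀ c ∈ C, ∀ c' ∈ C, c ≠ c' → d ≤ hammingDist c c')
    (hsys : ∃ D : Finset (Fin n → F), D ⊆ C ∧ IsSystematicCode k D) :
    ∃ Cb : Finset (Fin (n - t) → F),
      (∀ c ∈ Cb, ∀ c' ∈ Cb, c ≠ c' → d - 2 * r ≤ hammingDist c c') ∧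
      C.card * ballCard q r t ≤ q ^ t * Cb.card ∧
      (0 : Fin (n - t) → F) ∈ Cb ∧
      (∀ c ∈ Cb, c ≠ 0 → d - r ≤ hammingNorm c) :=
  exists_punctured_code_general q n k t d r F hF htk hkn hrd C hCdist hsys
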